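/- arXiv:1510.00250 — 2 statements merged into one kernel-verified Lean document; each statement's English description precedes it below -/
import Mathlib

section
/- Let v ∈ ℂ^d satisfy ν^v_w ≠ 2kπi for every word w and every nonzero integer k. For β ∈ 𝔤, let α_β : ℝ → ℂ^W be the unique function with all coefficient functions continuously differentiable such that α_β(0) = 1 and (d/dt) α_β(t)_w = (α_β(t)★(Ξ_{tv}β))_w for all words w and all t. Then the map β ↦ α_β(1) is a bijection from 𝔤 onto G; i.e., for every γ ∈ G there exists exactly one β ∈ 𝔤 with α_β(1) = γ. -/
open scoped BigOperators

/-- Convolution product on `ℂ^W`: `(δ★δ′)_w = Σ_{w=w₁w₂} δ_{w₁} δ′_{w₂}`. -/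
noncomputable def conv {A : Type*} (x y : List A → ℂ) : List A → ℂ :=
  fun w => ∑ i ∈ Finset.range (w.length + 1), x (w.take i) * y (w.drop i)

/-- Shuffle product of two words, as a multiset of words. -/
def shuffle {A : Type*} : List A → List A → Multiset (List A)
  | [], w => {w}
  | w, [] => {w}
  | a :: u, b :: v =>
      ((shuffle u (b :: v)).map (a :: ·)) + ((shuffle (a :: u) v).map (b :: ·))

/-- Membership in the group `G`: the shuffle relations with `γ_∅ = 1`. -/
def isGrp {A : Type*} (γ : List A → ℂ) : Prop :=
  γ [] = 1 ∧ ∀ w w' : List A, γ w * γ w' = ((shuffle w w').map γ).sum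

/-- Membership in the Lie algebra `𝔤`. -/
def isLie {A : Type*} (β : List A → ℂ) : Prop :=
  β [] = 0 ∧ ∀ w w' : List A, w ≠ [] → w' ≠ [] → ((shuffle w w').map β).sum = 0

/-- The unit `1` of the convolution product. -/
def unitCW {A : Type*} : List A → ℂ := fun w => match w with | [] => 1 | _ => 0

/-- `ν^v_ℓ = Σ_j v_j ν_{j,ℓ}` for a letter `ℓ`. -/
noncomputable def nuL {A : Type*} {d : ℕ} (ν : Fin d → A → ℂ) (v : Fin d → ℂ) (ℓ : A) : ℂ :=
  ∑ j, v j * ν j ℓ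

/-- `ν^v_w = ν^v_{ℓ₁} + ⋯ + ν^v_{ℓ_n}` for a word `w = ℓ₁⋯ℓ_n`. -/
noncomputable def nuW {A : Type*} {d : ℕ} (ν : Fin d → A → ℂ) (v : Fin d → ℂ) (w : List A) : ℂ :=
  (w.map (nuL ν v)).sum

/-- The operator `Ξ_v`: `(Ξ_v δ)_w = exp(ν^v_w) δ_w`. -/
noncomputable def XiOp {A : Type*} {d : ℕ} (ν : Fin d → A → ℂ) (v : Fin d → ℂ)
    (δ : List A → ℂ) : List A → ℂ :=
  fun w => Complex.exp (nuW ν v w) * δ w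

/-- The operator `ξ_v`: `(ξ_v δ)_w = ν^v_w δ_w`. -/
noncomputable def xiOp {A : Type*} {d : ℕ} (ν : Fin d → A → ℂ) (v : Fin d → ℂ)
    (δ : List A → ℂ) : List A → ℂ :=
  fun w => nuW ν v w * δ w

/-!
The equation is triangular in the length of words: `α_t(w)' = e^{t ν_w} β_w` plus terms in `α` on
proper prefixes and `β` on proper suffixes of `w`. With `P_z(t) = ∫₀ᵗ e^{sz} ds`, this gives
`α_1(w) = P_{ν_w}(1) β_w + (terms in shorter words)`, and non-resonance says exactly that
`P_{ν_w}(1) ≠ 0`; so `β` is recovered from `γ = α_1` by recursion on the length, which yields both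
existence and uniqueness.

For the shuffle relations, consider the defect `Φ_t = α_t(w) α_t(w') - Σ_{u ∈ w ⧢ w'} α_t(u)`.
Deconcatenation is compatible with the shuffle product, so once the relations hold for shorter
pairs of words, `Φ' = -e^{t(ν_w + ν_w')} Σ_{u ∈ w ⧢ w'} β_u`, i.e. `Φ_t = -P_{ν_w + ν_w'}(t) Σ β_u`.
If `β ∈ 𝔤` the defect vanishes, so `α_1 ∈ G`; conversely, if `α_1 = γ ∈ G` then `Φ_1 = 0` forces
`Σ β_u = 0`, so the `β` constructed from `γ` lies in `𝔤`.
-/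

section ShuffleExponential

variable {A : Type*}

@[simp] lemma shuffle_nil_left (w : List A) : shuffle [] w = {w} := by cases w <;> simp [shuffle]

@[simp] lemma shuffle_nil_right (w : List A) : shuffle w [] = {w} := by cases w <;> simp [shuffle]

lemma perm_append_of_mem_shuffle : ∀ {w w' u : List A}, u ∈ shuffle w w' → u.Perm (w ++ w')
  | [], _, _, h => by simp_all
  | _ :: _, [], _, h => by simp_all
  | a :: w, b :: w', u, h => by
    simp only [shuffle, Multiset.mem_add, Multiset.mem_map] at h
    rcases h with ⟨x, hx, rfl⟩ | ⟨x, hx, rfl⟩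
    · exact (perm_append_of_mem_shuffle hx).cons a
    · exact ((perm_append_of_mem_shuffle hx).cons b).trans List.perm_middle.symm

lemma length_of_mem_shuffle {w w' u : List A} (h : u ∈ shuffle w w') :
    u.length = w.length + w'.length := by
  simpa using (perm_append_of_mem_shuffle h).length_eq

noncomputable def shuffleSum (f : List A → ℂ) (w w' : List A) : ℂ :=
  ((shuffle w w').map f).sum

@[simp] lemma shuffleSum_nil_left (f : List A → ℂ) (w : List A) : shuffleSum f [] w = f w := by
  simp [shuffleSum]

@[simp] lemma shuffleSum_nil_right (f : List A → ℂ) (w : List A) : shuffleSum f w [] = f w := by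
  simp [shuffleSum]

lemma shuffleSum_cons_cons (f : List A → ℂ) (a b : A) (u v : List A) :
    shuffleSum f (a :: u) (b :: v) =
      shuffleSum (fun x => f (a :: x)) u (b :: v) +
        shuffleSum (fun x => f (b :: x)) (a :: u) v := by
  simp [shuffleSum, shuffle, Multiset.map_map]

lemma shuffleSum_add (f g : List A → ℂ) (w w' : List A) :
    shuffleSum (fun x => f x + g x) w w' = shuffleSum f w w' + shuffleSum g w w' := by
  simp [shuffleSum, Multiset.sum_map_add]

lemma shuffleSum_const_mul (c : ℂ) (f : List A → ℂ) (w w' : List A) :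
    shuffleSum (fun x => c * f x) w w' = c * shuffleSum f w w' := by
  simp [shuffleSum, Multiset.sum_map_mul_left]

lemma unitCW_of_ne_nil {w : List A} (hw : w ≠ []) : unitCW w = 0 := by
  cases w with
  | nil => exact absurd rfl hw
  | cons => rfl

lemma shuffleSum_unitCW {w : List A} (hw : w ≠ []) (w' : List A) :
    shuffleSum unitCW w w' = 0 :=
  Multiset.sum_eq_zero fun x hx => by
    obtain ⟨u, hu, rfl⟩ := Multiset.mem_map.1 hx
    refine unitCW_of_ne_nil fun hu0 => hw ?_
    have := length_of_mem_shuffle hu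
    simp_all [eq_comm (a := 0)]

lemma conv_cons (f g : List A → ℂ) (a : A) (x : List A) :
    conv f g (a :: x) = f [] * g (a :: x) + conv (fun y => f (a :: y)) g x := by
  rw [conv, Finset.sum_range_succ']
  simp [conv, add_comm]

def convInner (f g : List A → ℂ) (w : List A) : ℂ :=
  ∑ i ∈ Finset.Ioo 0 w.length, f (w.take i) * g (w.drop i)

lemma conv_eq_add_convInner {f g : List A → ℂ} (hf : f [] = 1) (hg : g [] = 0) (w : List A) :
    conv f g w = g w + convInner f g w := by
  rcases eq_or_ne w [] with rfl | hw
  · simp [conv, convInner, hf, hg]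
  have hw := List.length_pos_iff.2 hw
  have hsplit : Finset.range (w.length + 1) =
      insert 0 (insert w.length (Finset.Ioo 0 w.length)) := by
    ext i
    simp only [Finset.mem_range, Finset.mem_insert, Finset.mem_Ioo]
    omega
  rw [conv, convInner, hsplit, Finset.sum_insert (by simp; omega), Finset.sum_insert (by simp)]
  simp [hf, hg]

lemma shuffleSum_conv (f g : List A → ℂ) (w w' : List A) :
    shuffleSum (conv f g) w w' =
      ∑ j ∈ Finset.range (w.length + 1), ∑ k ∈ Finset.range (w'.length + 1),
        shuffleSum f (w.take j) (w'.take k) * shuffleSum g (w.drop j) (w'.drop k) := by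
  induction w generalizing w' f with
  | nil => simp [conv]
  | cons a u ihu =>
    induction w' generalizing f with
    | nil => simp [conv]
    | cons b v ihv =>
      rw [shuffleSum_cons_cons]
      simp only [conv_cons]
      rw [shuffleSum_add, shuffleSum_add, shuffleSum_const_mul, shuffleSum_const_mul,
        ihu (fun y => f (a :: y)), ihv (fun y => f (b :: y))]
      simp only [List.length_cons, Finset.sum_range_succ' _ (_ + 1), List.take_succ_cons,
        List.drop_succ_cons, List.take_zero, List.drop_zero, shuffleSum_nil_left,
        shuffleSum_nil_right, shuffleSum_cons_cons f a b, add_mul, Finset.sum_add_distrib]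
      rw [shuffleSum_cons_cons g a b]
      ring

lemma shuffleSum_conv_eq_leibniz (f b : List A → ℂ) (hf : f [] = 1) (hb : b [] = 0)
    {w w' : List A} (hw : w ≠ []) (hw' : w' ≠ [])
    (hf_shuffle : ∀ x y : List A, x.length + y.length < w.length + w'.length →
      f x * f y = shuffleSum f x y)
    (hb_shuffle : ∀ x y : List A, x ≠ [] → y ≠ [] →
      x.length + y.length < w.length + w'.length → shuffleSum b x y = 0) :
    shuffleSum (conv f b) w w' = conv f b w * f w' + f w * conv f b w' + shuffleSum b w w' := by
  have hn : 0 < w.length := List.length_pos_iff.2 hw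
  have hn' : 0 < w'.length := List.length_pos_iff.2 hw'
  rw [shuffleSum_conv]
  set T : ℕ → ℕ → ℂ := fun j k => shuffleSum f (w.take j) (w'.take k) *
    shuffleSum b (w.drop j) (w'.drop k) with hT
  have hcol : ∑ j ∈ Finset.range (w.length + 1), T j w'.length = conv f b w * f w' := by
    rw [conv, Finset.sum_mul]
    refine Finset.sum_congr rfl fun j hj => ?_
    rcases (Nat.lt_succ_iff.1 (Finset.mem_range.1 hj)).lt_or_eq with hj | rfl
    · simp only [hT, List.take_length, List.drop_length, shuffleSum_nil_right]
      rw [← hf_shuffle _ _ (by simp; omega)]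
      ring
    · simp [hT, hb]
  have hrow : ∑ k ∈ Finset.range w'.length, T w.length k = f w * conv f b w' := by
    rw [conv, Finset.sum_range_succ, List.drop_length, hb, mul_zero, add_zero, Finset.mul_sum]
    refine Finset.sum_congr rfl fun k hk => ?_
    have hk := Finset.mem_range.1 hk
    simp only [hT, List.take_length, List.drop_length, shuffleSum_nil_left]
    rw [← hf_shuffle _ _ (by simp; omega)]
    ring
  have hblock : ∑ j ∈ Finset.range w.length, ∑ k ∈ Finset.range w'.length, T j k =
      shuffleSum b w w' := by
    rw [← Finset.sum_product', Finset.sum_eq_single_of_mem (0, 0) (by simp [hn, hn'])]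
    · simp [hT, hf]
    · rintro ⟨j, k⟩ hjk hne
      simp only [Finset.mem_product, Finset.mem_range] at hjk
      have hpos : 0 < j + k :=
        Nat.pos_of_ne_zero fun h => hne (Prod.ext (by simp; omega) (by simp; omega))
      simp only [hT]
      rw [hb_shuffle _ _ (by simp; omega) (by simp; omega) (by simp; omega), mul_zero]
  rw [Finset.sum_congr rfl fun j _ => Finset.sum_range_succ (T j) w'.length,
    Finset.sum_add_distrib, hcol, Finset.sum_range_succ, hrow, hblock]
  ring

noncomputable def expIntegral (z : ℂ) (t : ℝ) : ℂ := ∫ s in (0 : ℝ)..t, Complex.exp (s * z)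

lemma hasDerivAt_expIntegral (z : ℂ) (t : ℝ) :
    HasDerivAt (expIntegral z) (Complex.exp (t * z)) t :=
  (by fun_prop : Continuous fun s : ℝ => Complex.exp (s * z)).integral_hasStrictDerivAt 0 t
    |>.hasDerivAt

@[simp] lemma expIntegral_zero (z : ℂ) : expIntegral z 0 = 0 := by simp [expIntegral]

lemma expIntegral_one_ne_zero {z : ℂ}
    (hz : ∀ k : ℤ, k ≠ 0 → z ≠ 2 * k * Real.pi * Complex.I) : expIntegral z 1 ≠ 0 := by
  rcases eq_or_ne z 0 with rfl | hz0
  · simp [expIntegral]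
  have : expIntegral z 1 = (Complex.exp z - 1) / z := by
    simp_rw [expIntegral, mul_comm _ z]
    simp [integral_exp_mul_complex hz0]
  rw [this]
  refine div_ne_zero (fun h => ?_) hz0
  obtain ⟨k, hk⟩ := Complex.exp_eq_one_iff.1 (sub_eq_zero.1 h)
  rcases eq_or_ne k 0 with rfl | hk0
  · simp_all
  · exact hz k hk0 (by rw [hk]; ring)

lemma eq_expIntegral_mul_of_hasDerivAt {f : ℝ → ℂ} {z c : ℂ}
    (hf : ∀ t : ℝ, HasDerivAt f (Complex.exp (t * z) * c) t) (h0 : f 0 = 0) (t : ℝ) :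
    f t = expIntegral z t * c := by
  have hg : ∀ s, HasDerivAt (fun s => f s - expIntegral z s * c) 0 s := fun s => by
    simpa only [sub_self] using (hf s).fun_sub ((hasDerivAt_expIntegral z s).mul_const c)
  have := is_const_of_deriv_eq_zero (fun s => (hg s).differentiableAt) (fun s => (hg s).deriv) t 0
  simp only [h0, expIntegral_zero, zero_mul, sub_zero] at this
  exact sub_eq_zero.1 this

lemma hasDerivAt_multiset_sum_map {ι : Type*} (m : Multiset ι) {F : ℝ → ι → ℂ} {F' : ι → ℂ}
    {t : ℝ} (h : ∀ i ∈ m, HasDerivAt (fun s => F s i) (F' i) t) :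
    HasDerivAt (fun s => (m.map (F s)).sum) (m.map F').sum t := by
  induction m using Multiset.induction_on with
  | empty => simpa using hasDerivAt_const t (0 : ℂ)
  | cons i m ih =>
    simp only [Multiset.map_cons, Multiset.sum_cons]
    exact (h i (Multiset.mem_cons_self i m)).add
      (ih fun j hj => h j (Multiset.mem_cons_of_mem hj))

lemma hasDerivAt_shuffleSum {α : ℝ → List A → ℂ} {α' : List A → ℂ} {t : ℝ}
    (h : ∀ u, HasDerivAt (fun s => α s u) (α' u) t) (w w' : List A) :
    HasDerivAt (fun s => shuffleSum (α s) w w') (shuffleSum α' w w') t :=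
  hasDerivAt_multiset_sum_map _ fun u _ => h u

lemma XiOp_nil {d : ℕ} {ν : Fin d → A → ℂ} {v : Fin d → ℂ} {β : List A → ℂ} (hβ : β [] = 0) :
    XiOp ν v β [] = 0 := by
  simp [XiOp, hβ]

section Frequencies

variable {d : ℕ} (ν : Fin d → A → ℂ) (v : Fin d → ℂ)

lemma nuW_append (w w' : List A) : nuW ν v (w ++ w') = nuW ν v w + nuW ν v w' := by
  simp [nuW]

lemma nuW_smul (t : ℝ) (w : List A) : nuW ν (t • v) w = t * nuW ν v w := by
  have hL : nuL ν (t • v) = fun ℓ => t * nuL ν v ℓ := by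
    funext ℓ
    simp [nuL, Finset.mul_sum, Complex.real_smul, mul_assoc]
  simp [nuW, hL, List.sum_map_mul_left]

lemma nuW_of_mem_shuffle {w w' u : List A} (h : u ∈ shuffle w w') :
    nuW ν v u = nuW ν v w + nuW ν v w' := by
  rw [← nuW_append, nuW, nuW, ((perm_append_of_mem_shuffle h).map _).sum_eq]

lemma shuffleSum_XiOp_smul (t : ℝ) (β : List A → ℂ) (w w' : List A) :
    shuffleSum (XiOp ν (t • v) β) w w' =
      Complex.exp (t * (nuW ν v w + nuW ν v w')) * shuffleSum β w w' := by
  rw [shuffleSum, shuffleSum, ← Multiset.sum_map_mul_left]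
  refine congrArg _ (Multiset.map_congr rfl fun u hu => ?_)
  rw [XiOp, nuW_smul, nuW_of_mem_shuffle ν v hu]

lemma integral_XiOp_smul (β : List A → ℂ) (w : List A) (t : ℝ) :
    ∫ s in (0 : ℝ)..t, XiOp ν (s • v) β w = expIntegral (nuW ν v w) t * β w := by
  simp only [XiOp, nuW_smul, intervalIntegral.integral_mul_const, expIntegral]

lemma continuous_XiOp_smul (β : List A → ℂ) (w : List A) :
    Continuous fun s : ℝ => XiOp ν (s • v) β w := by
  simp only [XiOp, nuW_smul]
  fun_prop

lemma continuous_convInner_XiOp_smul {α : ℝ → List A → ℂ} (β : List A → ℂ) (w : List A)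
    (hα : ∀ x : List A, x.length < w.length → Continuous fun s => α s x) :
    Continuous fun s => convInner (α s) (XiOp ν (s • v) β) w :=
  continuous_finsetSum _ fun i hi => by
    have := (Finset.mem_Ioo.1 hi).2
    exact (hα _ (by simp; omega)).mul (continuous_XiOp_smul ν v β _)

end Frequencies

def SolvesExpODE {d : ℕ} (ν : Fin d → A → ℂ) (v : Fin d → ℂ) (β : List A → ℂ)
    (α : ℝ → List A → ℂ) : Prop :=
  α 0 = unitCW ∧
    ∀ (t : ℝ) (w : List A), HasDerivAt (fun s => α s w) (conv (α t) (XiOp ν (t • v) β) w) t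

namespace SolvesExpODE

variable {d : ℕ} {ν : Fin d → A → ℂ} {v : Fin d → ℂ} {β β' : List A → ℂ}
  {α α' : ℝ → List A → ℂ}

lemma apply_nil (hα : SolvesExpODE ν v β α) (hβ : β [] = 0) (t : ℝ) : α t [] = 1 := by
  have hd : ∀ s : ℝ, HasDerivAt (fun r => α r []) 0 s := fun s => by
    simpa [conv, XiOp, hβ] using hα.2 s []
  rw [is_const_of_deriv_eq_zero (fun s => (hd s).differentiableAt) (fun s => (hd s).deriv) t 0,
    hα.1]
  rfl

lemma mul_sub_shuffleSum_eq (hα : SolvesExpODE ν v β α) (hβ : β [] = 0)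
    {w w' : List A} (hw : w ≠ []) (hw' : w' ≠ [])
    (hα_shuffle : ∀ (t : ℝ) (x y : List A), x.length + y.length < w.length + w'.length →
      α t x * α t y = shuffleSum (α t) x y)
    (hβ_shuffle : ∀ x y : List A, x ≠ [] → y ≠ [] →
      x.length + y.length < w.length + w'.length → shuffleSum β x y = 0) (t : ℝ) :
    α t w * α t w' - shuffleSum (α t) w w' =
      expIntegral (nuW ν v w + nuW ν v w') t * -shuffleSum β w w' := by
  refine eq_expIntegral_mul_of_hasDerivAt
    (f := fun s => α s w * α s w' - shuffleSum (α s) w w') (fun t => ?_) ?_ t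
  · have hd := ((hα.2 t w).fun_mul (hα.2 t w')).fun_sub (hasDerivAt_shuffleSum (hα.2 t) w w')
    rw [shuffleSum_conv_eq_leibniz _ _ (hα.apply_nil hβ t) (XiOp_nil hβ) hw hw' (hα_shuffle t)
        fun x y hx hy hxy => by rw [shuffleSum_XiOp_smul, hβ_shuffle x y hx hy hxy, mul_zero],
      shuffleSum_XiOp_smul, sub_add_cancel_left, ← mul_neg] at hd
    exact hd
  · rw [hα.1, unitCW_of_ne_nil hw, shuffleSum_unitCW hw, zero_mul, sub_zero]

lemma mul_eq_shuffleSum_of_length_lt (hα : SolvesExpODE ν v β α) (hβ : β [] = 0) {N : ℕ}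
    (hβ_shuffle : ∀ x y : List A, x ≠ [] → y ≠ [] → x.length + y.length < N →
      shuffleSum β x y = 0)
    (t : ℝ) {w w' : List A} (hN : w.length + w'.length < N) :
    α t w * α t w' = shuffleSum (α t) w w' := by
  induction N generalizing t w w' with
  | zero => omega
  | succ N ih =>
    rcases eq_or_ne w [] with rfl | hw
    · simp [hα.apply_nil hβ]
    rcases eq_or_ne w' [] with rfl | hw'
    · simp [hα.apply_nil hβ]
    rcases (Nat.lt_succ_iff.1 hN).lt_or_eq with hlt | hN
    · exact ih (fun x y hx hy hxy => hβ_shuffle x y hx hy (by omega)) t hlt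
    have := hα.mul_sub_shuffleSum_eq hβ hw hw'
      (fun t x y hxy => ih (fun x y hx hy hxy => hβ_shuffle x y hx hy (by omega)) t (hN ▸ hxy))
      (fun x y hx hy hxy => hβ_shuffle x y hx hy (by omega)) t
    rwa [hβ_shuffle w w' hw hw' (by omega), neg_zero, mul_zero, sub_eq_zero] at this

lemma isGrp_apply_one (hα : SolvesExpODE ν v β α) (hβ : isLie β) : isGrp (α 1) :=
  ⟨hα.apply_nil hβ.1 1, fun _ _ => hα.mul_eq_shuffleSum_of_length_lt hβ.1
    (fun x y hx hy _ => hβ.2 x y hx hy) 1 (Nat.lt_succ_self _)⟩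

lemma eq_of_apply_one_eq (hα : SolvesExpODE ν v β α) (hα' : SolvesExpODE ν v β' α')
    (hβ : β [] = 0) (hβ' : β' [] = 0) (hres : ∀ w : List A, expIntegral (nuW ν v w) 1 ≠ 0)
    (h1 : α 1 = α' 1) : β = β' := by
  suffices key : ∀ n (w : List A), w.length = n → β w = β' w ∧ ∀ t, α t w = α' t w from
    funext fun w => (key _ w rfl).1
  intro n
  induction n using Nat.strong_induction_on with
  | _ n ih =>
  rintro w rfl
  rcases eq_or_ne w [] with rfl | hw
  · exact ⟨hβ.trans hβ'.symm, fun t => (hα.apply_nil hβ t).trans (hα'.apply_nil hβ' t).symm⟩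
  have hinner : ∀ t : ℝ, convInner (α t) (XiOp ν (t • v) β) w =
      convInner (α' t) (XiOp ν (t • v) β') w := fun t =>
    Finset.sum_congr rfl fun i hi => by
      simp only [Finset.mem_Ioo] at hi
      rw [(ih _ (by simp; omega) _ rfl).2 t, XiOp, XiOp, (ih _ (by simp; omega) _ rfl).1]
  have hdiff : ∀ t : ℝ, α t w - α' t w = expIntegral (nuW ν v w) t * (β w - β' w) := by
    refine eq_expIntegral_mul_of_hasDerivAt (fun t => ?_) (by rw [hα.1, hα'.1, sub_self])
    have hd := (hα.2 t w).sub (hα'.2 t w)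
    rwa [conv_eq_add_convInner (hα.apply_nil hβ t) (XiOp_nil hβ),
      conv_eq_add_convInner (hα'.apply_nil hβ' t) (XiOp_nil hβ'),
      hinner, add_sub_add_right_eq_sub, XiOp, XiOp, nuW_smul, ← mul_sub] at hd
  have hβw : β w = β' w := by
    have h := hdiff 1
    rw [h1, sub_self, eq_comm, mul_eq_zero] at h
    exact sub_eq_zero.1 (h.resolve_left (hres w))
  exact ⟨hβw, fun t => sub_eq_zero.1 (by rw [hdiff, hβw, sub_self, mul_zero])⟩

end SolvesExpODE

section Logarithm

variable {d : ℕ} (ν : Fin d → A → ℂ) (v : Fin d → ℂ) (γ : List A → ℂ)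

/-- The pair `(β_w, t ↦ α_t(w))`, by recursion on the length of `w`: `α_t(w)` integrates the
triangular equation, and `β_w` is chosen so that `α_1(w) = γ_w`. -/
noncomputable def logPair : List A → ℂ × (ℝ → ℂ)
  | [] => (0, fun _ => 1)
  | a :: u =>
    let inner : ℝ → ℂ := fun s => ∑ i ∈ (Finset.Ioo 0 (a :: u).length).attach,
      (logPair ((a :: u).take i)).2 s *
        (Complex.exp (nuW ν (s • v) ((a :: u).drop i)) * (logPair ((a :: u).drop i)).1)
    let b := (γ (a :: u) - ∫ s in (0 : ℝ)..1, inner s) / expIntegral (nuW ν v (a :: u)) 1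
    (b, fun t => ∫ s in (0 : ℝ)..t, Complex.exp (nuW ν (s • v) (a :: u)) * b + inner s)
termination_by w => w.length
decreasing_by
  all_goals
    have := Finset.mem_Ioo.1 i.2
    simp only [List.length_take, List.length_drop]
    omega

noncomputable def logCoeff (w : List A) : ℂ := (logPair ν v γ w).1

noncomputable def logPath (t : ℝ) (w : List A) : ℂ := (logPair ν v γ w).2 t

@[simp] lemma logCoeff_nil : logCoeff ν v γ [] = 0 := by rw [logCoeff, logPair]

@[simp] lemma logPath_nil (t : ℝ) : logPath ν v γ t [] = 1 := by rw [logPath, logPair]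

lemma sum_attach_logPair (w : List A) (s : ℝ) :
    ∑ i ∈ (Finset.Ioo 0 w.length).attach, (logPair ν v γ (w.take i)).2 s *
      (Complex.exp (nuW ν (s • v) (w.drop i)) * (logPair ν v γ (w.drop i)).1) =
    convInner (logPath ν v γ s) (XiOp ν (s • v) (logCoeff ν v γ)) w :=
  Finset.sum_attach _ fun i => (logPair ν v γ (w.take i)).2 s *
      (Complex.exp (nuW ν (s • v) (w.drop i)) * (logPair ν v γ (w.drop i)).1)

lemma logCoeff_cons (a : A) (u : List A) :
    logCoeff ν v γ (a :: u) = (γ (a :: u) - ∫ s in (0 : ℝ)..1,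
      convInner (logPath ν v γ s) (XiOp ν (s • v) (logCoeff ν v γ)) (a :: u)) /
        expIntegral (nuW ν v (a :: u)) 1 := by
  rw [logCoeff, logPair]
  simp only [sum_attach_logPair]

lemma logPath_cons (a : A) (u : List A) (t : ℝ) :
    logPath ν v γ t (a :: u) = ∫ s in (0 : ℝ)..t,
      XiOp ν (s • v) (logCoeff ν v γ) (a :: u) +
        convInner (logPath ν v γ s) (XiOp ν (s • v) (logCoeff ν v γ)) (a :: u) := by
  rw [logPath, logPair]
  simp only [sum_attach_logPair, ← logCoeff_cons]
  rfl

lemma continuous_logPath (w : List A) : Continuous fun s => logPath ν v γ s w := by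
  induction hn : w.length using Nat.strong_induction_on generalizing w with
  | _ n ih =>
  cases w with
  | nil => simpa using continuous_const
  | cons a u =>
    have hg := (continuous_XiOp_smul ν v (logCoeff ν v γ) (a :: u)).add
      (continuous_convInner_XiOp_smul ν v (logCoeff ν v γ) (a :: u)
        fun x hx => ih _ (hn ▸ hx) x rfl)
    simp_rw [logPath_cons]
    exact continuous_iff_continuousAt.2 fun t =>
      (hg.integral_hasStrictDerivAt 0 t).hasDerivAt.continuousAt

lemma hasDerivAt_logPath (w : List A) (t : ℝ) :
    HasDerivAt (fun s => logPath ν v γ s w)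
      (XiOp ν (t • v) (logCoeff ν v γ) w +
        convInner (logPath ν v γ t) (XiOp ν (t • v) (logCoeff ν v γ)) w) t := by
  cases w with
  | nil => simpa [XiOp, convInner] using hasDerivAt_const t (1 : ℂ)
  | cons a u =>
    have hg := (continuous_XiOp_smul ν v (logCoeff ν v γ) (a :: u)).add
      (continuous_convInner_XiOp_smul ν v (logCoeff ν v γ) (a :: u)
        fun x _ => continuous_logPath ν v γ x)
    simp_rw [logPath_cons]
    exact (hg.integral_hasStrictDerivAt 0 t).hasDerivAt

lemma solvesExpODE_logPath : SolvesExpODE ν v (logCoeff ν v γ) (logPath ν v γ) := by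
  refine ⟨funext fun w => ?_, fun t w => ?_⟩
  · cases w <;> simp [logPath_cons, unitCW]
  · rw [conv_eq_add_convInner (logPath_nil ν v γ t) (XiOp_nil (logCoeff_nil ν v γ))]
    exact hasDerivAt_logPath ν v γ w t

lemma contDiff_logPath (w : List A) : ContDiff ℝ 1 fun s => logPath ν v γ s w := by
  refine contDiff_one_iff_deriv.2 ⟨fun t => (hasDerivAt_logPath ν v γ w t).differentiableAt, ?_⟩
  rw [funext fun t => (hasDerivAt_logPath ν v γ w t).deriv]
  exact (continuous_XiOp_smul ν v _ w).add
    (continuous_convInner_XiOp_smul ν v _ _ fun x _ => continuous_logPath ν v γ x)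

lemma logPath_one (hγ : γ [] = 1) (hres : ∀ w : List A, expIntegral (nuW ν v w) 1 ≠ 0) :
    logPath ν v γ 1 = γ := by
  funext w
  cases w with
  | nil => simp [hγ]
  | cons a u =>
    rw [logPath_cons, intervalIntegral.integral_add
      ((continuous_XiOp_smul ν v _ _).intervalIntegrable 0 1)
      ((continuous_convInner_XiOp_smul ν v _ _
        fun x _ => continuous_logPath ν v γ x).intervalIntegrable 0 1),
      integral_XiOp_smul, logCoeff_cons, mul_div_cancel₀ _ (hres _), sub_add_cancel]

lemma isLie_logCoeff (hγ : isGrp γ) (hres : ∀ w : List A, expIntegral (nuW ν v w) 1 ≠ 0) :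
    isLie (logCoeff ν v γ) := by
  refine ⟨logCoeff_nil ν v γ, fun w w' hw hw' => ?_⟩
  induction hn : w.length + w'.length using Nat.strong_induction_on generalizing w w' with
  | _ n ih =>
  have hlower : ∀ x y : List A, x ≠ [] → y ≠ [] → x.length + y.length < w.length + w'.length →
      shuffleSum (logCoeff ν v γ) x y = 0 := fun x y hx hy hxy => ih _ (hn ▸ hxy) x y hx hy rfl
  have hα := solvesExpODE_logPath ν v γ
  have hdefect := hα.mul_sub_shuffleSum_eq (logCoeff_nil ν v γ) hw hw'
    (fun t x y hxy => hα.mul_eq_shuffleSum_of_length_lt (logCoeff_nil ν v γ) hlower t hxy)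
    hlower 1
  have hγw : γ w * γ w' = shuffleSum γ w w' := hγ.2 w w'
  rw [logPath_one ν v γ hγ.1 hres, hγw, sub_self, ← nuW_append, eq_comm, mul_eq_zero,
    neg_eq_zero] at hdefect
  exact hdefect.resolve_left (hres _)

end Logarithm

end ShuffleExponential

theorem stmt12_general {A : Type*} {d : ℕ} (ν : Fin d → A → ℂ)
    (v : Fin d → ℂ)
    (hres : ∀ (w : List A) (k : ℤ), k ≠ 0 →
      nuW ν v w ≠ 2 * (k : ℂ) * Real.pi * Complex.I) :
    (∀ β : List A → ℂ, isLie β →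
      ∀ α : ℝ → List A → ℂ,
        (∀ w : List A, ContDiff ℝ 1 (fun t => α t w)) →
        α 0 = unitCW →
        (∀ (t : ℝ) (w : List A),
          HasDerivAt (fun s => α s w) (conv (α t) (XiOp ν (t • v) β) w) t) →
        isGrp (α 1)) ∧
    (∀ γ : List A → ℂ, isGrp γ →
      ∃! β : List A → ℂ, isLie β ∧
        ∃ α : ℝ → List A → ℂ,
          (∀ w : List A, ContDiff ℝ 1 (fun t => α t w)) ∧
          α 0 = unitCW ∧
          (∀ (t : ℝ) (w : List A),
            HasDerivAt (fun s => α s w) (conv (α t) (XiOp ν (t • v) β) w) t) ∧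
          α 1 = γ) := by
  have hP : ∀ w : List A, expIntegral (nuW ν v w) 1 ≠ 0 := fun w =>
    expIntegral_one_ne_zero (hres w)
  refine ⟨fun β hβ α _ hα0 hder => SolvesExpODE.isGrp_apply_one ⟨hα0, hder⟩ hβ, fun γ hγ => ?_⟩
  have hsol := solvesExpODE_logPath ν v γ
  refine ⟨logCoeff ν v γ, ⟨isLie_logCoeff ν v γ hγ hP, logPath ν v γ, contDiff_logPath ν v γ,
    hsol.1, hsol.2, logPath_one ν v γ hγ.1 hP⟩, ?_⟩
  rintro β ⟨hβ, α, -, hα0, hder, hα1⟩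
  exact SolvesExpODE.eq_of_apply_one_eq ⟨hα0, hder⟩ hsol hβ.1 (logCoeff_nil ν v γ) hP
    (hα1.trans (logPath_one ν v γ hγ.1 hP).symm)

/-- Under the non-resonance condition `ν^v_w ≠ 2kπi` (`k ∈ ℤ \ {0}`),
the exponential map `β ↦ α_β(1)`, where `α_β` solves `α(0) = 1`,
`(d/dt)α(t) = α(t)★(Ξ_{tv}β)`, is a bijection from `𝔤` onto `G`: for each `β ∈ 𝔤` the value
`α_β(1)` lies in `G`, and each `γ ∈ G` is of the form `α_β(1)` for exactly one `β ∈ 𝔤`. -/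
theorem stmt12 {A : Type*} [Countable A] {d : ℕ} (hd : 1 ≤ d) (ν : Fin d → A → ℂ)
    (v : Fin d → ℂ)
    (hres : ∀ (w : List A) (k : ℤ), k ≠ 0 →
      nuW ν v w ≠ 2 * (k : ℂ) * Real.pi * Complex.I) :
    (∀ β : List A → ℂ, isLie β →
      ∀ α : ℝ → List A → ℂ,
        (∀ w : List A, ContDiff ℝ 1 (fun t => α t w)) →
        α 0 = unitCW →
        (∀ (t : ℝ) (w : List A),
          HasDerivAt (fun s => α s w) (conv (α t) (XiOp ν (t • v) β) w) t) →
        isGrp (α 1)) ∧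
    (∀ γ : List A → ℂ, isGrp γ →
      ∃! β : List A → ℂ, isLie β ∧
        ∃ α : ℝ → List A → ℂ,
          (∀ w : List A, ContDiff ℝ 1 (fun t => α t w)) ∧
          α 0 = unitCW ∧
          (∀ (t : ℝ) (w : List A),
            HasDerivAt (fun s => α s w) (conv (α t) (XiOp ν (t • v) β) w) t) ∧
          α 1 = γ) :=
  stmt12_general ν v hres
end

section
/- Let v ∈ ℂ^d and β ∈ 𝔤, and assume there is a letter 𝟘 ∈ A with ν^v_𝟘 = 0 and β_𝟘 ≠ 0. Let u ∈ ℂ^d. Then there is at most one ρ ∈ 𝔤 satisfying the two conditions: (i) ξ_v ρ − ξ_u β + [β,ρ] = 0, and (ii) ρ_{ℓ₁⋯ℓ_n} = 0 for every nonempty word ℓ₁⋯ℓ_n with ν^v_{ℓ₁} = ⋯ = ν^v_{ℓ_n} = 0; i.e., any two elements of 𝔤 satisfying (i) and (ii) coincide. -/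
open scoped BigOperators

/-!
Put `σ = ρ - ρ'`; then `ξ_v σ + [β, σ] = 0`, and we show `σ_w = 0` by induction on `|w|`.
Once `σ` vanishes on shorter words, the equation at a word `w` of length `n + 1` collapses to
`ν^v_w σ_w = 0`, so only words with `ν^v_w = 0` remain. For those, the equation at `𝟘 w` with
`w = w' c` reads `β_𝟘 σ_w = σ_{𝟘 w'} β_c`: the value at `w` is forced by the value at `𝟘 w'`.
Iterating, every word of length `n + 1` is reached from `𝟘ⁿ⁺¹`, where `σ` vanishes by (ii).
-/

open List

theorem List.forall_of_length_eq_succ_of_replicate {A : Type*} {P : List A → Prop} (a : A)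
    (n : ℕ) (hrep : P (replicate (n + 1) a))
    (hstep : ∀ w c, w.length = n → P (a :: w) → P (w ++ [c])) :
    ∀ w : List A, w.length = n + 1 → P w := by
  suffices h : ∀ y : List A, y.length ≤ n + 1 → P (replicate (n + 1 - y.length) a ++ y) by
    intro w hw
    simpa [hw] using h w hw.le
  intro y
  induction y using List.reverseRecOn with
  | nil => simpa using hrep
  | append_singleton y c ih =>
    intro hy
    rw [length_append, length_singleton] at hy
    have hcons : a :: (replicate (n - y.length) a ++ y) = replicate (n + 1 - y.length) a ++ y := by
      rw [← cons_append, ← replicate_succ, Nat.sub_add_comm (by omega)]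
    have := hstep (replicate (n - y.length) a ++ y) c (by simp; omega) (hcons ▸ ih (by omega))
    simpa [Nat.add_sub_add_right] using this

section Conv

variable {A : Type*} {x y : List A → ℂ}

theorem conv_sub_left (x x' y : List A → ℂ) : conv (x - x') y = conv x y - conv x' y := by
  ext w
  simp only [conv, Pi.sub_apply, sub_mul, Finset.sum_sub_distrib]

theorem conv_sub_right (x y y' : List A → ℂ) : conv x (y - y') = conv x y - conv x y' := by
  ext w
  simp only [conv, Pi.sub_apply, mul_sub, Finset.sum_sub_distrib]

theorem conv_eq_zero_of_left_nil {w : List A} (hx : x [] = 0)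
    (hy : ∀ u : List A, u.length < w.length → y u = 0) : conv x y w = 0 := by
  refine Finset.sum_eq_zero fun i hi => ?_
  rcases Nat.eq_zero_or_pos i with rfl | hpos
  · simp [hx]
  · rw [hy _ (by rw [length_drop]; rw [Finset.mem_range] at hi; omega), mul_zero]

theorem conv_eq_zero_of_right_nil {w : List A} (hy : y [] = 0)
    (hx : ∀ u : List A, u.length < w.length → x u = 0) : conv x y w = 0 := by
  refine Finset.sum_eq_zero fun i hi => ?_
  rw [Finset.mem_range] at hi
  rcases Nat.lt_or_ge i w.length with hlt | hge
  · rw [hx _ (by rw [length_take]; omega), zero_mul]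
  · rw [drop_eq_nil_of_le hge, hy, mul_zero]

theorem conv_cons_s16 {w : List A} (a : A) (hx : x [] = 0)
    (hy : ∀ u : List A, u.length < w.length → y u = 0) : conv x y (a :: w) = x [a] * y w := by
  rw [conv, length_cons, Finset.sum_range_succ', Finset.sum_range_succ',
    Finset.sum_eq_zero fun i hi => ?_]
  · simp [hx]
  · rw [Finset.mem_range] at hi
    rw [take_succ_cons, drop_succ_cons, hy _ (by rw [length_drop]; omega), mul_zero]

theorem conv_concat {w : List A} (c : A) (hy : y [] = 0)
    (hx : ∀ u : List A, u.length < w.length → x u = 0) : conv x y (w ++ [c]) = x w * y [c] := by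
  rw [conv, length_append, length_singleton, Finset.sum_range_succ, Finset.sum_range_succ,
    Finset.sum_eq_zero fun i hi => ?_]
  · simp [hy]
  · rw [Finset.mem_range] at hi
    rw [take_append_of_le_length (by omega), hx _ (by rw [length_take]; omega), zero_mul]

end Conv

theorem xiOp_sub {A : Type*} {d : ℕ} (ν : Fin d → A → ℂ) (v : Fin d → ℂ) (δ δ' : List A → ℂ) :
    xiOp ν v (δ - δ') = xiOp ν v δ - xiOp ν v δ' := by
  ext w
  simp only [xiOp, Pi.sub_apply, mul_sub]

theorem nuW_cons {A : Type*} {d : ℕ} (ν : Fin d → A → ℂ) (v : Fin d → ℂ) (a : A) (w : List A) :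
    nuW ν v (a :: w) = nuL ν v a + nuW ν v w := by
  simp [nuW]

section Homogeneous

variable {A : Type*} {d : ℕ} {ν : Fin d → A → ℂ} {v : Fin d → ℂ} {β σ : List A → ℂ} {ℓ₀ : A}

theorem eq_zero_of_length_eq_succ (hβ : β [] = 0) (hℓ₀ : nuL ν v ℓ₀ = 0) (hβ₀ : β [ℓ₀] ≠ 0)
    (heq : xiOp ν v σ + (conv β σ - conv σ β) = 0) {n : ℕ}
    (hrep : σ (replicate (n + 1) ℓ₀) = 0) (hshort : ∀ u : List A, u.length ≤ n → σ u = 0) :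
    ∀ w : List A, w.length = n + 1 → σ w = 0 := by
  have heq_at (w : List A) : nuW ν v w * σ w + (conv β σ w - conv σ β w) = 0 := congrFun heq w
  refine forall_of_length_eq_succ_of_replicate ℓ₀ n hrep fun w c hw hcons => ?_
  have hlen : (w ++ [c]).length = n + 1 := by simp [hw]
  by_cases hν : nuW ν v (w ++ [c]) = 0
  · have h := heq_at (ℓ₀ :: (w ++ [c]))
    rw [nuW_cons, hℓ₀, hν, conv_cons_s16 ℓ₀ hβ fun u hu => hshort u (by omega), ← cons_append,
      conv_concat c hβ fun u hu => hshort u (by simp at hu; omega), hcons] at h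
    simpa [hβ₀] using h
  · have h := heq_at (w ++ [c])
    rw [conv_eq_zero_of_left_nil hβ fun u hu => hshort u (by omega),
      conv_eq_zero_of_right_nil hβ fun u hu => hshort u (by omega)] at h
    simpa [hν] using h

theorem eq_zero_of_xiOp_add_conv_sub_conv_eq_zero (hβ : β [] = 0) (hσ : σ [] = 0)
    (hℓ₀ : nuL ν v ℓ₀ = 0) (hβ₀ : β [ℓ₀] ≠ 0) (heq : xiOp ν v σ + (conv β σ - conv σ β) = 0)
    (hrep : ∀ n, σ (replicate (n + 1) ℓ₀) = 0) : σ = 0 := by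
  suffices h : ∀ n, ∀ u : List A, u.length ≤ n → σ u = 0 from
    funext fun w => h w.length w le_rfl
  intro n
  induction n with
  | zero => intro u hu; rwa [eq_nil_of_length_eq_zero (Nat.le_zero.mp hu)]
  | succ n ih =>
    intro u hu
    rcases Nat.lt_or_ge u.length (n + 1) with hlt | hge
    · exact ih u (by omega)
    · exact eq_zero_of_length_eq_succ hβ hℓ₀ hβ₀ heq (hrep n) ih u (by omega)

end Homogeneous

theorem stmt16_general {A : Type*} {d : ℕ} (ν : Fin d → A → ℂ)
    (v u : Fin d → ℂ) (β : List A → ℂ) (hβ : isLie β)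
    (ℓ₀ : A) (hℓ₀ : nuL ν v ℓ₀ = 0) (hβ₀ : β [ℓ₀] ≠ 0)
    (ρ ρ' : List A → ℂ) (hρ : isLie ρ) (hρ' : isLie ρ')
    (hi : xiOp ν v ρ - xiOp ν u β + (conv β ρ - conv ρ β) = 0)
    (hi' : xiOp ν v ρ' - xiOp ν u β + (conv β ρ' - conv ρ' β) = 0)
    (hii : ∀ w : List A, w ≠ [] → (∀ ℓ ∈ w, nuL ν v ℓ = 0) → ρ w = 0)
    (hii' : ∀ w : List A, w ≠ [] → (∀ ℓ ∈ w, nuL ν v ℓ = 0) → ρ' w = 0) :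
    ρ = ρ' := by
  have heq : xiOp ν v (ρ - ρ') + (conv β (ρ - ρ') - conv (ρ - ρ') β) = 0 :=
    calc xiOp ν v (ρ - ρ') + (conv β (ρ - ρ') - conv (ρ - ρ') β)
        = (xiOp ν v ρ - xiOp ν u β + (conv β ρ - conv ρ β))
          - (xiOp ν v ρ' - xiOp ν u β + (conv β ρ' - conv ρ' β)) := by
          rw [xiOp_sub, conv_sub_left, conv_sub_right]; abel
      _ = 0 := by rw [hi, hi', sub_zero]
  have hrep (n : ℕ) : (ρ - ρ') (replicate (n + 1) ℓ₀) = 0 := by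
    have hzero : ∀ ℓ ∈ replicate (n + 1) ℓ₀, nuL ν v ℓ = 0 := fun ℓ hℓ =>
      eq_of_mem_replicate hℓ ▸ hℓ₀
    rw [Pi.sub_apply, hii _ (by simp) hzero, hii' _ (by simp) hzero, sub_zero]
  have hσ : (ρ - ρ') [] = 0 := by rw [Pi.sub_apply, hρ.1, hρ'.1, sub_zero]
  exact sub_eq_zero.mp (eq_zero_of_xiOp_add_conv_sub_conv_eq_zero hβ.1 hσ hℓ₀ hβ₀ heq hrep)

/-- Assume there is a letter `𝟘` with `ν^v_𝟘 = 0` and `β_𝟘 ≠ 0`. Then for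
each `u ∈ ℂ^d` there is at most one `ρ ∈ 𝔤` with (i) `ξ_v ρ − ξ_u β + [β,ρ] = 0` and
(ii) `ρ_w = 0` for each nonempty word `w` all of whose letters `ℓ` satisfy `ν^v_ℓ = 0`. -/
theorem stmt16 {A : Type*} [Countable A] {d : ℕ} (hd : 1 ≤ d) (ν : Fin d → A → ℂ)
    (v u : Fin d → ℂ) (β : List A → ℂ) (hβ : isLie β)
    (ℓ₀ : A) (hℓ₀ : nuL ν v ℓ₀ = 0) (hβ₀ : β [ℓ₀] ≠ 0)
    (ρ ρ' : List A → ℂ) (hρ : isLie ρ) (hρ' : isLie ρ')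
    (hi : xiOp ν v ρ - xiOp ν u β + (conv β ρ - conv ρ β) = 0)
    (hi' : xiOp ν v ρ' - xiOp ν u β + (conv β ρ' - conv ρ' β) = 0)
    (hii : ∀ w : List A, w ≠ [] → (∀ ℓ ∈ w, nuL ν v ℓ = 0) → ρ w = 0)
    (hii' : ∀ w : List A, w ≠ [] → (∀ ℓ ∈ w, nuL ν v ℓ = 0) → ρ' w = 0) :
    ρ = ρ' :=
  stmt16_general ν v u β hβ ℓ₀ hℓ₀ hβ₀ ρ ρ' hρ hρ' hi hi' hii hii'
end
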